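/- Let d ≥ 1 and let κ : ℝ^d → ℝ^{d×d} be a smooth matrix-valued function that is Y-periodic (where Y = [0,1]^d, i.e. κ(y + e_k) = κ(y) for every y ∈ ℝ^d and every standard basis vector e_k) and uniformly elliptic: there exists α > 0 such that ξ·κ(y)ξ ≥ α|ξ|² for all y, ξ ∈ ℝ^d. If u : ℝ^d → ℝ is smooth, Y-periodic, and satisfies ∂/∂y_i(κ_ij(y) ∂u/∂y_j)(y) = 0 for all y ∈ ℝ^d (Einstein summation over i, j), then u is constant. -/

import Mathlib

open scoped BigOperators
open Set MeasureTheory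

/-- Partial derivative in the `i`-th coordinate direction. -/
noncomputable def pd (d : ℕ) (i : Fin d) (f : (Fin d → ℝ) → ℝ) (x : Fin d → ℝ) : ℝ :=
  fderiv ℝ f x (Pi.single i 1)

lemma aux_fderiv_translate {m : ℕ} (f : (Fin m → ℝ) → ℝ) (hf : Differentiable ℝ f)
    (c x : Fin m → ℝ) : fderiv ℝ (fun y => f (y + c)) x = fderiv ℝ f (x + c) := by
  have h1 : (fun y : Fin m → ℝ => f (y + c)) = f ∘ fun y => y + c := rfl
  have h2 : DifferentiableAt ℝ (fun y : Fin m → ℝ => y + c) x :=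
    (differentiable_id.add_const c).differentiableAt
  rw [h1, fderiv_comp x (hf _) h2]
  have h3 : fderiv ℝ (fun y : Fin m → ℝ => y + c) x = ContinuousLinearMap.id ℝ _ := by
    rw [fderiv_add_const]
    exact fderiv_id'
  rw [h3, ContinuousLinearMap.comp_id]

lemma aux_insertNth_succ {n : ℕ} (i : Fin (n + 1)) (c : ℝ) (x : Fin n → ℝ) :
    Fin.insertNth i (c + 1) x = (Fin.insertNth i c x + Pi.single i 1 : Fin (n + 1) → ℝ) := by
  funext j
  refine Fin.succAboveCases i ?_ ?_ j
  · simp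
  · intro k
    simp [Pi.single_eq_of_ne (Fin.succAbove_ne i k)]

/-- A smooth `Y`-periodic (`Y = [0,1]^d`) solution of the periodic cell equation
`∂/∂y_i (κ_ij(y) ∂u/∂y_j) = 0` with a smooth `Y`-periodic uniformly elliptic
coefficient `κ` is constant. -/
theorem periodic_cell_solution_constant
    (d : ℕ) (hd : 1 ≤ d)
    (κ : (Fin d → ℝ) → Fin d → Fin d → ℝ)
    (hκ : ∀ i j, ContDiff ℝ (⊤ : ℕ∞) (fun y => κ y i j))
    (hκper : ∀ (y : Fin d → ℝ) (k : Fin d) (i j : Fin d),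
      κ (y + Pi.single k 1) i j = κ y i j)
    (hell : ∃ α : ℝ, 0 < α ∧ ∀ (y ξ : Fin d → ℝ),
      α * (∑ i, ξ i ^ 2) ≤ ∑ i, ∑ j, ξ i * κ y i j * ξ j)
    (u : (Fin d → ℝ) → ℝ)
    (hu : ContDiff ℝ (⊤ : ℕ∞) u)
    (huper : ∀ (y : Fin d → ℝ) (k : Fin d), u (y + Pi.single k 1) = u y)
    (heq : ∀ y : Fin d → ℝ,
      (∑ i, pd d i (fun y' => ∑ j, κ y' i j * pd d j u y') y) = 0) :
    ∃ c : ℝ, ∀ y : Fin d → ℝ, u y = c := by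
  obtain ⟨n, rfl⟩ : ∃ n, d = n + 1 := ⟨d - 1, by omega⟩
  clear hd
  obtain ⟨α, hα, hell⟩ := hell
  have h1top : (1 : WithTop ℕ∞) ≤ ((⊤ : ℕ∞) : WithTop ℕ∞) := by exact_mod_cast le_top
  have hud : Differentiable ℝ u := hu.differentiable (by simp)
  have hufd : ContDiff ℝ (⊤ : ℕ∞) (fderiv ℝ u) :=
    (contDiff_infty_iff_fderiv.mp (hu.of_le (by simp))).2
  -- partial derivatives of u are smooth
  have hpdu : ∀ j, ContDiff ℝ (⊤ : ℕ∞) (pd (n + 1) j u) := fun j =>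
    hufd.clm_apply contDiff_const
  -- periodicity of partial derivatives of u
  have hpduper : ∀ (y : Fin (n + 1) → ℝ) (k j : Fin (n + 1)),
      pd (n + 1) j u (y + Pi.single k 1) = pd (n + 1) j u y := by
    intro y k j
    have h1 : (fun z : Fin (n + 1) → ℝ => u (z + Pi.single k 1)) = u :=
      funext fun z => huper z k
    have h2 := aux_fderiv_translate u hud (Pi.single k 1) y
    rw [h1] at h2
    unfold pd
    rw [← h2]
  -- the vector field F i x = u x * (κ ∇u)_i x
  set F : Fin (n + 1) → (Fin (n + 1) → ℝ) → ℝ :=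
    fun i x => u x * ∑ j, κ x i j * pd (n + 1) j u x with hFdef
  have hG : ∀ i, ContDiff ℝ (⊤ : ℕ∞)
      (fun x : Fin (n + 1) → ℝ => ∑ j, κ x i j * pd (n + 1) j u x) := fun i =>
    ContDiff.sum fun j _ => ((hκ i j).of_le (by simp)).mul (hpdu j)
  have hF : ∀ i, ContDiff ℝ (⊤ : ℕ∞) (F i) := fun i => (hu.of_le (by simp)).mul (hG i)
  have hFper : ∀ (y : Fin (n + 1) → ℝ) (k i : Fin (n + 1)),
      F i (y + Pi.single k 1) = F i y := by
    intro y k i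
    simp only [hFdef, huper y k, hκper y k, hpduper y k]
  -- the divergence of F equals the quadratic form Q
  set Q : (Fin (n + 1) → ℝ) → ℝ :=
    fun x => ∑ i, ∑ j, pd (n + 1) i u x * κ x i j * pd (n + 1) j u x with hQdef
  have hdiv : ∀ x, (∑ i, fderiv ℝ (F i) x (Pi.single i 1)) = Q x := by
    intro x
    have h1 : ∀ i, fderiv ℝ (F i) x (Pi.single i 1)
        = u x * pd (n + 1) i (fun y' => ∑ j, κ y' i j * pd (n + 1) j u y') x
          + (∑ j, κ x i j * pd (n + 1) j u x) * pd (n + 1) i u x := by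
      intro i
      have : fderiv ℝ (F i) x
          = u x • fderiv ℝ (fun y' => ∑ j, κ y' i j * pd (n + 1) j u y') x
            + (∑ j, κ x i j * pd (n + 1) j u x) • fderiv ℝ u x :=
        fderiv_mul (hud x) ((hG i).differentiable (by simp) x)
      rw [this]
      simp only [ContinuousLinearMap.add_apply, ContinuousLinearMap.smul_apply, smul_eq_mul]
      rfl
    calc (∑ i, fderiv ℝ (F i) x (Pi.single i 1))
        = ∑ i, (u x * pd (n + 1) i (fun y' => ∑ j, κ y' i j * pd (n + 1) j u y') x
            + (∑ j, κ x i j * pd (n + 1) j u x) * pd (n + 1) i u x) :=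
          Finset.sum_congr rfl fun i _ => h1 i
      _ = u x * (∑ i, pd (n + 1) i (fun y' => ∑ j, κ y' i j * pd (n + 1) j u y') x)
            + ∑ i, (∑ j, κ x i j * pd (n + 1) j u x) * pd (n + 1) i u x := by
          rw [Finset.sum_add_distrib, Finset.mul_sum]
      _ = ∑ i, (∑ j, κ x i j * pd (n + 1) j u x) * pd (n + 1) i u x := by
          rw [heq x, mul_zero, zero_add]
      _ = Q x := by
          refine Finset.sum_congr rfl fun i _ => ?_
          rw [Finset.sum_mul]
          exact Finset.sum_congr rfl fun j _ => by ring
  -- the quadratic form dominates α |∇u|²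
  have hQcont : Continuous Q := by
    refine continuous_finset_sum _ fun i _ => continuous_finset_sum _ fun j _ => ?_
    exact (((hpdu i).continuous.mul (hκ i j).continuous).mul (hpdu j).continuous)
  have hQlb : ∀ x, α * (∑ i, pd (n + 1) i u x ^ 2) ≤ Q x := fun x =>
    hell x (fun i => pd (n + 1) i u x)
  -- all partial derivatives of u vanish
  have hpd0 : ∀ (y0 : Fin (n + 1) → ℝ) (j : Fin (n + 1)), pd (n + 1) j u y0 = 0 := by
    intro y0 j0
    set a : Fin (n + 1) → ℝ := fun i => y0 i - 2⁻¹ with ha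
    set b : Fin (n + 1) → ℝ := fun i => a i + 1 with hb
    have hle : a ≤ b := fun i => by simp [hb]
    -- divergence theorem
    have hFcont : ∀ i, Continuous (fun x => fderiv ℝ (F i) x (Pi.single i 1)) := fun i =>
      (((contDiff_infty_iff_fderiv.mp (hF i)).2).clm_apply contDiff_const).continuous
    have hdivthm := MeasureTheory.integral_divergence_of_hasFDerivAt_off_countable'
      a b hle F (fun i x => fderiv ℝ (F i) x) ∅ Set.countable_empty
      (fun i => (hF i).continuous.continuousOn)
      (fun x _ i => ((hF i).differentiable (by simp) x).hasFDerivAt)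
      ((continuous_finset_sum _ fun i _ => hFcont i).integrableOn_Icc)
    -- the boundary terms cancel by periodicity
    have hbd : ∀ i : Fin (n + 1),
        ((∫ x in Icc (a ∘ i.succAbove) (b ∘ i.succAbove), F i (Fin.insertNth i (b i) x)) -
          ∫ x in Icc (a ∘ i.succAbove) (b ∘ i.succAbove), F i (Fin.insertNth i (a i) x)) = 0 := by
      intro i
      have hpt : ∀ x : Fin n → ℝ, F i (Fin.insertNth i (b i) x) = F i (Fin.insertNth i (a i) x) := by
        intro x
        have : b i = a i + 1 := rfl
        rw [this, aux_insertNth_succ, hFper]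
      simp only [hpt, sub_self]
    rw [Finset.sum_congr rfl (fun i _ => hbd i), Finset.sum_const_zero] at hdivthm
    -- so the integral of Q over the box vanishes
    have hQint0 : (∫ x in Icc a b, Q x) = 0 := by
      rw [← hdivthm]
      exact setIntegral_congr_fun measurableSet_Icc fun x _ => (hdiv x).symm
    -- the (continuous, nonnegative) function α |∇u|² has zero integral
    set h : (Fin (n + 1) → ℝ) → ℝ := fun x => α * ∑ i, pd (n + 1) i u x ^ 2 with hhdef
    have hhcont : Continuous h :=
      continuous_const.mul (continuous_finset_sum _ fun i _ => ((hpdu i).continuous.pow 2))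
    have hhnn : ∀ x, 0 ≤ h x := fun x =>
      mul_nonneg hα.le (Finset.sum_nonneg fun i _ => sq_nonneg _)
    have hint0 : (∫ x in Icc a b, h x) = 0 := by
      have h1 : (∫ x in Icc a b, h x) ≤ ∫ x in Icc a b, Q x :=
        setIntegral_mono_on (hhcont.integrableOn_Icc) (hQcont.integrableOn_Icc)
          measurableSet_Icc (fun x _ => hQlb x)
      have h2 : 0 ≤ ∫ x in Icc a b, h x :=
        setIntegral_nonneg measurableSet_Icc fun x _ => hhnn x
      rw [hQint0] at h1
      linarith
    have hae : h =ᵐ[volume.restrict (Icc a b)] 0 :=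
      (integral_eq_zero_iff_of_nonneg hhnn hhcont.integrableOn_Icc).mp hint0
    -- hence h vanishes at the interior point y0
    have hy0 : h y0 = 0 := by
      by_contra hne
      have hopen : IsOpen {x : Fin (n + 1) → ℝ | h x ≠ 0} :=
        isOpen_compl_singleton.preimage hhcont
      obtain ⟨ε, hε, hball⟩ := Metric.isOpen_iff.mp hopen y0 hne
      set r : ℝ := min ε 4⁻¹ with hr
      have hrpos : 0 < r := lt_min hε (by norm_num)
      have hsub : Metric.ball y0 r ⊆ {x | h x ≠ 0} ∩ Icc a b := by
        intro x hx
        have hd : dist x y0 < r := hx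
        constructor
        · exact hball (lt_of_lt_of_le hd (min_le_left _ _) : dist x y0 < ε)
        · have hxi : ∀ i, |x i - y0 i| < 4⁻¹ := by
            intro i
            rw [← Real.dist_eq]
            exact lt_of_le_of_lt (dist_le_pi_dist x y0 i)
              (lt_of_lt_of_le hd (min_le_right _ _))
          refine ⟨fun i => ?_, fun i => ?_⟩
          · have h' := abs_sub_lt_iff.mp (hxi i)
            show y0 i - 2⁻¹ ≤ x i
            linarith [h'.2]
          · have h' := abs_sub_lt_iff.mp (hxi i)
            show x i ≤ y0 i - 2⁻¹ + 1
            linarith [h'.1]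
      have hnull : volume ({x : Fin (n + 1) → ℝ | h x ≠ 0} ∩ Icc a b) = 0 := by
        have h0 : ∀ᵐ x ∂(volume.restrict (Icc a b)), h x = 0 := by
          filter_upwards [hae] with x hx
          simpa using hx
        have h2 := MeasureTheory.ae_iff.mp h0
        rwa [Measure.restrict_apply hopen.measurableSet] at h2
      have hb0 : volume (Metric.ball y0 r) = 0 :=
        le_antisymm (hnull ▸ measure_mono hsub) zero_le
      exact absurd hb0 (Metric.measure_ball_pos volume y0 hrpos).ne'
    -- conclude
    have hsum0 : (∑ i, pd (n + 1) i u y0 ^ 2) = 0 := by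
      have := hy0
      simp only [hhdef] at this
      rcases mul_eq_zero.mp this with h' | h'
      · exact absurd h' hα.ne'
      · exact h'
    have := (Finset.sum_eq_zero_iff_of_nonneg (fun i _ => sq_nonneg _)).mp hsum0 j0
      (Finset.mem_univ j0)
    exact pow_eq_zero_iff (by norm_num) |>.mp this
  -- the full derivative of u vanishes everywhere
  have hfz : ∀ x, fderiv ℝ u x = 0 := by
    intro x
    apply ContinuousLinearMap.ext
    intro ξ
    have hξ : ξ = ∑ i, ξ i • (Pi.single i (1 : ℝ) : Fin (n + 1) → ℝ) := by
      conv_lhs => rw [← Finset.univ_sum_single ξ]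
      refine Finset.sum_congr rfl fun i _ => ?_
      rw [← Pi.single_smul, smul_eq_mul, mul_one]
    have hpd0' : ∀ i, fderiv ℝ u x (Pi.single i (1 : ℝ)) = 0 := fun i => hpd0 x i
    rw [hξ, map_sum]
    simp [_root_.map_smul, hpd0']
  refine ⟨u 0, fun y => ?_⟩
  exact is_const_of_fderiv_eq_zero hud hfz y 0
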